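/- Let d ≥ 1 and let H be a finite d-regular simple graph that has BEL gadgets. Suppose there exists a vertex v of H such that the neighborhood N(v) is an independent set and the graph obtained from H by deleting v and all vertices of N(v) is connected. Then s(H) = 2d − 1. -/

import Mathlib

/-!
Lower bound: if a vertex `w` of a Ramsey-minimal `F` had degree at most `2d - 2`, color `F - w`
without a monochromatic `H` (minimality) and split the edges at `w` into two color classes of
fewer than `d` edges each; no monochromatic copy of the `d`-regular `H` can then use `w`.

Upper bound: on `2d - 1` slot vertices glue, for every `d`-subset `k` and color `b`, a copy of
`H - v` with `N(v)` placed on `k` and all its edges colored `b`. As `N(v)` is independent and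
`H - v - N(v)` is connected, this coloring has no monochromatic `H`, so a BEL gadget `F` forces it
up to swapping colors. Adding an apex joined to the slot vertices makes `F` Ramsey for `H`, and a
Ramsey-minimal subgraph of the result must use the apex, which has degree `2d - 1`.
-/

open SimpleGraph

def colorSubgraph {V : Type*} (F : SimpleGraph V) (c : Sym2 V → Bool) (b : Bool) :
    SimpleGraph V where
  Adj x y := F.Adj x y ∧ c s(x, y) = b
  symm := by
    constructor
    intro x y h
    exact ⟨h.1.symm, by rw [Sym2.eq_swap]; exact h.2⟩
  loopless := by
    constructor
    intro x h
    exact F.irrefl h.1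

def ContainsCopy {V W : Type*} (G : SimpleGraph V) (H : SimpleGraph W) : Prop :=
  ∃ f : W → V, Function.Injective f ∧ ∀ ⦃a b⦄, H.Adj a b → G.Adj (f a) (f b)

def HasMonoCopy {V W : Type*} (F : SimpleGraph V) (H : SimpleGraph W)
    (c : Sym2 V → Bool) : Prop :=
  ∃ b : Bool, ContainsCopy (colorSubgraph F c b) H

def IsRamseyFor {V W : Type*} (F : SimpleGraph V) (H : SimpleGraph W) : Prop :=
  ∀ c : Sym2 V → Bool, HasMonoCopy F H c

def IsRamseyMinimalFor {V W : Type*} (F : SimpleGraph V) (H : SimpleGraph W) : Prop :=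
  IsRamseyFor F H ∧ ∀ F' : F.Subgraph, F' ≠ ⊤ → ¬ IsRamseyFor F'.coe H

noncomputable def degOf {V : Type*} (G : SimpleGraph V) (v : V) : ℕ :=
  (G.neighborSet v).ncard

noncomputable def minDeg {V : Type*} (G : SimpleGraph V) : ℕ :=
  sInf {k | ∃ v, degOf G v = k}

noncomputable def sVal {W : Type*} (H : SimpleGraph W) : ℕ :=
  sInf {k | ∃ (n : ℕ) (F : SimpleGraph (Fin n)), IsRamseyMinimalFor F H ∧ minDeg F = k}

def HasBELGadgets {W : Type*} (H : SimpleGraph W) : Prop :=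
  ∀ (m : ℕ) (G : SimpleGraph (Fin m)) (ψ : Sym2 (Fin m) → Bool),
    ¬ HasMonoCopy G H ψ →
    ∃ (n : ℕ) (F : SimpleGraph (Fin n)) (g : Fin m → Fin n),
      ¬ IsRamseyFor F H ∧
      Function.Injective g ∧
      (∀ a b, G.Adj a b ↔ F.Adj (g a) (g b)) ∧
      ∀ c : Sym2 (Fin n) → Bool, ¬ HasMonoCopy F H c →
        (∀ a b, G.Adj a b → c s(g a, g b) = ψ s(a, b)) ∨
        (∀ a b, G.Adj a b → c s(g a, g b) = !ψ s(a, b))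

lemma Set.exists_subset_ncard_lt_ncard_diff_lt {α : Type*} {s : Set α} (hs : s.Finite) {d : ℕ}
    (h : s.ncard < 2 * d - 1) : ∃ t ⊆ s, t.ncard < d ∧ (s \ t).ncard < d := by
  obtain ⟨t, hts, ht⟩ := Set.exists_subset_card_eq (min_le_left s.ncard (d - 1))
  refine ⟨t, hts, by omega, ?_⟩
  rw [Set.ncard_sdiff hts (hs.subset hts)]
  omega

lemma SimpleGraph.Reachable.mem_of_adj_closed {α : Type*} {G : SimpleGraph α} {S : Set α}
    (hS : ∀ a b, G.Adj a b → a ∈ S → b ∈ S) {a b : α} (h : G.Reachable a b) (ha : a ∈ S) :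
    b ∈ S := by
  obtain ⟨p⟩ := h
  induction p with
  | nil => exact ha
  | cons hab _ ih => exact ih (hS _ _ hab ha)

lemma degOf_le_of_copy {α β : Type*} [Finite β] {A : SimpleGraph α} {B : SimpleGraph β}
    (f : Copy A B) (a : α) : degOf A a ≤ degOf B (f a) := by
  have hf : Function.Injective f := f.injective
  rw [degOf, degOf, ← Set.ncard_image_of_injective _ hf]
  refine Set.ncard_le_ncard ?_ (Set.toFinite _)
  rintro _ ⟨b, hb, rfl⟩
  exact f.toHom.map_adj hb

lemma minDeg_le {α : Type*} (G : SimpleGraph α) (a : α) : minDeg G ≤ degOf G a :=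
  Nat.sInf_le ⟨a, rfl⟩

lemma le_minDeg {α : Type*} [Nonempty α] {G : SimpleGraph α} {m : ℕ}
    (h : ∀ a, m ≤ degOf G a) : m ≤ minDeg G :=
  le_csInf ⟨_, Classical.arbitrary α, rfl⟩ (by rintro _ ⟨a, rfl⟩; exact h a)

section Ramsey

variable {α β W : Type*} {A : SimpleGraph α} {B : SimpleGraph β} {H : SimpleGraph W}

lemma HasMonoCopy.of_copy {c : Sym2 β → Bool} (f : Copy A B)
    (h : HasMonoCopy A H (fun e => c (e.map f))) : HasMonoCopy B H c := by
  obtain ⟨b, g, hg, hadj⟩ := h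
  exact ⟨b, f ∘ g, f.injective.comp hg,
    fun x y hxy => ⟨f.toHom.map_adj (hadj hxy).1, (hadj hxy).2⟩⟩

lemma IsRamseyFor.of_copy (h : IsRamseyFor A H) (f : Copy A B) : IsRamseyFor B H :=
  fun _ => (h _).of_copy f

lemma IsRamseyFor.nonempty [Nonempty W] (h : IsRamseyFor A H) : Nonempty α := by
  obtain ⟨_, g, -⟩ := h fun _ => true
  exact ⟨g (Classical.arbitrary W)⟩

lemma SimpleGraph.Subgraph.eq_top_of_comap_eq_top (φ : A ≃g B) {S : B.Subgraph}
    (h : S.comap φ.toHom = ⊤) : S = ⊤ := by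
  have hverts : ∀ a, φ a ∈ S.verts := fun a => by
    simpa using congrArg (a ∈ ·.verts) h
  have hadj : ∀ a a', A.Adj a a' → S.Adj (φ a) (φ a') := fun a a' haa' => by
    have := congrArg (·.Adj a a') h
    simp only [Subgraph.comap_adj, Subgraph.top_adj, eq_iff_iff] at this
    exact (this.2 haa').2
  refine le_antisymm le_top ⟨fun x _ => by simpa using hverts (φ.symm x), fun x y hxy => ?_⟩
  simpa using hadj _ _ (φ.symm.map_adj_iff.2 hxy)

lemma IsRamseyMinimalFor.of_iso (h : IsRamseyMinimalFor A H) (φ : A ≃g B) :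
    IsRamseyMinimalFor B H := by
  refine ⟨h.1.of_copy φ.toCopy, fun S hS hSR => h.2 (S.comap φ.toHom)
    (fun h' => hS (Subgraph.eq_top_of_comap_eq_top φ h'))
    (hSR.of_copy ⟨⟨fun x => ⟨φ.symm x, ?_⟩, ?_⟩, ?_⟩)⟩
  · simp
  · intro x y hxy
    simpa [Subgraph.comap_adj] using ⟨φ.symm.map_adj_iff.2 (S.adj_sub hxy), hxy⟩
  · intro x y hxy
    simpa [Subtype.ext_iff] using hxy

lemma IsRamseyFor.exists_isRamseyMinimalFor_subgraph [Finite α] (h : IsRamseyFor A H) :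
    ∃ S : A.Subgraph, IsRamseyMinimalFor S.coe H := by
  obtain ⟨S, hS, hmin⟩ := exists_minimal_of_wellFoundedLT
    (fun S : A.Subgraph => IsRamseyFor S.coe H) ⟨⊤, h.of_copy Subgraph.topIso.symm.toCopy⟩
  refine ⟨S, hS, fun T hT hTR => ?_⟩
  have hlt : S.coeSubgraph T < S := lt_of_le_of_ne (Subgraph.coeSubgraph_le T) fun heq =>
    hT (Subgraph.coeSubgraph_injective S (heq.trans (Subgraph.map_hom_top S).symm))
  exact hlt.not_ge (hmin
    (hTR.of_copy (Copy.isoSubgraphMap ⟨S.hom, Subgraph.hom_injective⟩ T).toCopy) hlt.le)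

lemma IsRamseyFor.exists_isRamseyMinimalFor_fin [Finite α] (h : IsRamseyFor A H) :
    ∃ (n : ℕ) (F : SimpleGraph (Fin n)), IsRamseyMinimalFor F H ∧ Nonempty (Copy F A) := by
  obtain ⟨S, hS⟩ := h.exists_isRamseyMinimalFor_subgraph
  have := Fintype.ofFinite S.verts
  let e := Fintype.equivFin S.verts
  exact ⟨_, _, hS.of_iso (Iso.map e _),
    ⟨(Copy.mk S.hom Subgraph.hom_injective).comp (Iso.map e S.coe).symm.toCopy⟩⟩

lemma HasBELGadgets.exists_forcing (hbel : HasBELGadgets H) {T : Type*} [Fintype T]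
    (G : SimpleGraph T) (ψ : Sym2 T → Bool) (hψ : ¬HasMonoCopy G H ψ) :
    ∃ (N : ℕ) (F : SimpleGraph (Fin N)) (g : T → Fin N),
      ¬IsRamseyFor F H ∧ Function.Injective g ∧ (∀ a b, G.Adj a b ↔ F.Adj (g a) (g b)) ∧
      ∀ c : Sym2 (Fin N) → Bool, ¬HasMonoCopy F H c →
        (∀ a b, G.Adj a b → c s(g a, g b) = ψ s(a, b)) ∨
        (∀ a b, G.Adj a b → c s(g a, g b) = !ψ s(a, b)) := by
  let φ := Iso.map (Fintype.equivFin T) G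
  obtain ⟨N, F, g, hF, hg, hadj, hforce⟩ :=
    hbel _ _ (fun e => ψ (e.map φ.symm)) fun h => hψ (h.of_copy φ.symm.toCopy)
  refine ⟨N, F, g ∘ φ, hF, hg.comp φ.injective, fun a b => ?_, fun c hc => ?_⟩
  · exact φ.map_adj_iff.symm.trans (hadj _ _)
  · rcases hforce c hc with h | h
    · exact .inl fun a b hab => by simpa using h _ _ (φ.map_adj_iff.2 hab)
    · exact .inr fun a b hab => by simpa using h _ _ (φ.map_adj_iff.2 hab)

end Ramsey

lemma le_degOf_of_isRamseyMinimalFor {α W : Type*} [Finite α] {F : SimpleGraph α}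
    {H : SimpleGraph W} {d : ℕ} (hreg : ∀ w, degOf H w = d) (hF : IsRamseyMinimalFor F H)
    (w : α) : 2 * d - 1 ≤ degOf F w := by
  classical
  by_contra! hw
  obtain ⟨A, hAN, hA, hNA⟩ := Set.exists_subset_ncard_lt_ncard_diff_lt (Set.toFinite _) hw
  let S : F.Subgraph := (⊤ : F.Subgraph).deleteVerts {w}
  obtain ⟨c', hc'⟩ : ∃ c', ¬HasMonoCopy S.coe H c' := by
    simpa [IsRamseyFor] using hF.2 S fun h => by simpa [S] using congrArg (w ∈ ·.verts) h
  let c : Sym2 α → Bool := fun e => if w ∈ e then decide (∃ a ∈ A, e = s(w, a))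
    else Function.extend (Sym2.map Subtype.val) c' (fun _ => true) e
  have hcw : ∀ y, c s(w, y) = decide (y ∈ A) := fun y => by
    simp only [c, Sym2.mem_mk_left, if_true, Sym2.congr_right, exists_eq_right']
  have hcS : ∀ p q : S.verts, c s(p, q) = c' s(p, q) := fun p q => by
    have hp : (p : α) ≠ w := by simpa [S] using p.2
    have hq : (q : α) ≠ w := by simpa [S] using q.2
    show (if w ∈ Sym2.map Subtype.val s(p, q) then _ else _) = _
    rw [if_neg (by simp [hp.symm, hq.symm])]
    exact (Sym2.map.injective Subtype.val_injective).extend_apply c' _ s(p, q)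
  obtain ⟨b, f, hf, hadj⟩ := hF.1 c
  by_cases hfw : ∃ x, f x = w
  · obtain ⟨x, rfl⟩ := hfw
    have hsub : f '' H.neighborSet x ⊆ if b then A else F.neighborSet (f x) \ A := by
      rintro _ ⟨y, hy, rfl⟩
      obtain ⟨hxy, hc⟩ := hadj hy
      rw [hcw] at hc
      cases b <;> simp_all
    have hcard := Set.ncard_le_ncard hsub (by split <;> exact Set.toFinite _)
    rw [Set.ncard_image_of_injective _ hf] at hcard
    have hx : (H.neighborSet x).ncard = d := hreg x
    cases b <;> simp only [Bool.false_eq_true, if_true, if_false] at hcard <;> omega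
  · push Not at hfw
    apply hc'
    refine ⟨b, fun x => ⟨f x, by simpa [S] using hfw x⟩,
      fun x y h => hf (by simpa using congrArg Subtype.val h), fun x y hxy => ⟨?_, ?_⟩⟩
    · simpa [S, hfw] using (hadj hxy).1
    · rw [← hcS]
      exact (hadj hxy).2

section Gadget

variable {V : Type*} {H : SimpleGraph V} {v : V} {d : ℕ}

variable (H v) in
/-- The vertex set of `H − v − N(v)`. -/
def farSet : Set V := ({v} ∪ H.neighborSet v)ᶜ

lemma mem_farSet {x : V} : x ∈ farSet H v ↔ x ≠ v ∧ x ∉ H.neighborSet v := by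
  simp [farSet, not_or]

variable (d) in
abbrev Slot : Type := {S : Finset (Fin (2 * d - 1)) // S.card = d}

lemma exists_slot_forall_eq (hd : 1 ≤ d) (col : Fin (2 * d - 1) → Bool) :
    ∃ (b : Bool) (k : Slot d), ∀ i ∈ k.1, col i = b := by
  classical
  obtain ⟨b, hb⟩ := Fintype.exists_lt_card_fiber_of_mul_lt_card col (n := d - 1)
    (by simp; omega)
  obtain ⟨k, hk, hkcard⟩ := Finset.exists_subset_card_eq (Nat.le_of_pred_lt hb)
  exact ⟨b, ⟨k, hkcard⟩, fun i hi => (Finset.mem_filter.1 (hk hi)).2⟩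

variable (V d) in
/-- Slot vertices `inl i` and copy vertices `inr (c, x)`; the latter are only used for
`x ∈ farSet H v`, the others stay isolated in the gadget. -/
abbrev GadgetVert : Type _ := Fin (2 * d - 1) ⊕ (Slot d × Bool) × V

variable (e : ∀ k : Slot d, H.neighborSet v ≃ k.1)

open Classical in
/-- The copy `c = (k, b)` of `H − v`: `N(v)` is placed on the slot `k` via `e k`, every other
vertex `x` becomes `inr (c, x)`. -/
noncomputable def copyMap (c : Slot d × Bool) (x : V) : GadgetVert V d :=
  if hx : x ∈ H.neighborSet v then .inl (e c.1 ⟨x, hx⟩) else .inr (c, x)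

lemma copyMap_of_mem {c : Slot d × Bool} {x : V} (hx : x ∈ H.neighborSet v) :
    copyMap e c x = .inl (e c.1 ⟨x, hx⟩) := dif_pos hx

lemma copyMap_of_notMem {c : Slot d × Bool} {x : V} (hx : x ∉ H.neighborSet v) :
    copyMap e c x = .inr (c, x) := dif_neg hx

lemma copyMap_eq_inr_iff {c c' : Slot d × Bool} {x y : V} :
    copyMap e c x = .inr (c', y) ↔ x ∉ H.neighborSet v ∧ c = c' ∧ x = y := by
  by_cases hx : x ∈ H.neighborSet v
  · simp [copyMap_of_mem e hx, hx]
  · simp [copyMap_of_notMem e hx, hx]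

lemma copyMap_injective (c : Slot d × Bool) : Function.Injective (copyMap e c) := by
  intro x y hxy
  by_cases hx : x ∈ H.neighborSet v <;> by_cases hy : y ∈ H.neighborSet v
  · simpa [copyMap_of_mem e hx, copyMap_of_mem e hy, Subtype.ext_iff] using hxy
  · simp [copyMap_of_mem e hx, copyMap_of_notMem e hy] at hxy
  · simp [copyMap_of_notMem e hx, copyMap_of_mem e hy] at hxy
  · simpa [copyMap_of_notMem e hx, copyMap_of_notMem e hy] using hxy

def gadget : SimpleGraph (GadgetVert V d) where
  Adj s t := ∃ c x y, x ≠ v ∧ y ≠ v ∧ H.Adj x y ∧ copyMap e c x = s ∧ copyMap e c y = t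
  symm := ⟨fun _ _ ⟨c, x, y, hx, hy, h, hs, ht⟩ => ⟨c, y, x, hy, hx, h.symm, ht, hs⟩⟩
  loopless := ⟨fun _ ⟨c, _, _, _, _, h, hs, ht⟩ =>
    H.loopless.irrefl _ (copyMap_injective e c (hs.trans ht.symm) ▸ h)⟩

def copyTag : GadgetVert V d → Bool
  | .inl _ => true
  | .inr (c, _) => c.2

def gadgetColor : Sym2 (GadgetVert V d) → Bool :=
  Sym2.lift ⟨fun s t => copyTag s && copyTag t, fun _ _ => Bool.and_comm _ _⟩

lemma gadgetColor_copyMap (hindep : ∀ x ∈ H.neighborSet v, ∀ y ∈ H.neighborSet v, ¬H.Adj x y)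
    (c : Slot d × Bool) {x y : V} (hxy : H.Adj x y) :
    gadgetColor s(copyMap e c x, copyMap e c y) = c.2 := by
  by_cases hx : x ∈ H.neighborSet v <;> by_cases hy : y ∈ H.neighborSet v
  · exact absurd hxy (hindep x hx y hy)
  all_goals simp [gadgetColor, copyTag, copyMap_of_mem, copyMap_of_notMem, hx, hy]

lemma neighborSet_copyMap (c : Slot d × Bool) {r : V} (hr : r ∈ farSet H v) :
    (gadget e).neighborSet (copyMap e c r) = copyMap e c '' H.neighborSet r := by
  rw [mem_farSet] at hr
  ext t
  constructor
  · rintro ⟨c', x, y, -, -, hxy, hx, rfl⟩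
    rw [copyMap_of_notMem e hr.2, copyMap_eq_inr_iff] at hx
    obtain ⟨-, rfl, rfl⟩ := hx
    exact ⟨y, hxy, rfl⟩
  · rintro ⟨y, hy, rfl⟩
    exact ⟨c, r, y, hr.1, fun h => hr.2 (h ▸ hy.symm), hy, rfl, rfl⟩

end Gadget

section NoMonoCopy

variable {V : Type*} {H : SimpleGraph V} {v : V} {d : ℕ}
  {e : ∀ k : Slot d, H.neighborSet v ≃ k.1} {b : Bool}

lemma ncard_farSet_add [Finite V] (hreg : ∀ w, degOf H w = d) :
    (farSet H v).ncard + d + 1 = Nat.card V := by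
  have hN : (H.neighborSet v).ncard = d := hreg v
  have h := Set.ncard_add_ncard_compl ({v} ∪ H.neighborSet v)
  rw [Set.ncard_union_eq (by simp), Set.ncard_singleton, hN] at h
  rw [farSet]
  omega

/-- A copy of `H` in color `b` is locally onto at the vertices it sends into a copy of `H − v`,
because those have degree exactly `d` in the gadget. -/
lemma image_neighborSet_of_eq_inr [Finite V] (hreg : ∀ w, degOf H w = d)
    (f : Copy H (colorSubgraph (gadget e) gadgetColor b)) {c : Slot d × Bool} {x r : V}
    (hr : r ∈ farSet H v) (hx : f x = .inr (c, r)) :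
    f '' H.neighborSet x = copyMap e c '' H.neighborSet r := by
  have hsub : f '' H.neighborSet x ⊆ copyMap e c '' H.neighborSet r := by
    rintro _ ⟨y, hy, rfl⟩
    rw [← neighborSet_copyMap e c hr, copyMap_of_notMem e (mem_farSet.1 hr).2, ← hx]
    exact (f.toHom.map_adj hy).1
  have hf : Function.Injective f := f.injective
  refine Set.eq_of_subset_of_ncard_le hsub ?_ (Set.toFinite _)
  rw [Set.ncard_image_of_injective _ (copyMap_injective e c), Set.ncard_image_of_injective _ hf]
  exact ((hreg r).trans (hreg x).symm).le

lemma exists_eq_inr_of_connected [Finite V] (hreg : ∀ w, degOf H w = d)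
    (hconn : (H.induce (farSet H v)).Connected)
    (f : Copy H (colorSubgraph (gadget e) gadgetColor b)) {c : Slot d × Bool} {x₀ r₀ r : V}
    (hr₀ : r₀ ∈ farSet H v) (hx₀ : f x₀ = .inr (c, r₀)) (hr : r ∈ farSet H v) :
    ∃ x, f x = .inr (c, r) := by
  refine (hconn.preconnected ⟨r₀, hr₀⟩ ⟨r, hr⟩).mem_of_adj_closed
    (S := {p | ∃ x, f x = .inr (c, p.1)}) ?_ ⟨x₀, hx₀⟩
  rintro p q hpq ⟨x, hx⟩
  have hq : copyMap e c q ∈ f '' H.neighborSet x := by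
    rw [image_neighborSet_of_eq_inr hreg f p.2 hx]
    exact ⟨q, hpq, rfl⟩
  obtain ⟨y, -, hy⟩ := hq
  exact ⟨y, hy.trans (copyMap_of_notMem e (mem_farSet.1 q.2).2)⟩

lemma exists_eq_inl_of_mem_slot [Finite V] (hd : 2 ≤ d) (hreg : ∀ w, degOf H w = d)
    (hindep : ∀ x ∈ H.neighborSet v, ∀ y ∈ H.neighborSet v, ¬H.Adj x y)
    (hconn : (H.induce (farSet H v)).Connected)
    (f : Copy H (colorSubgraph (gadget e) gadgetColor b)) {k : Slot d} {b' : Bool} {x₀ r₀ : V}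
    (hr₀ : r₀ ∈ farSet H v) (hx₀ : f x₀ = .inr ((k, b'), r₀)) {i : Fin (2 * d - 1)}
    (hi : i ∈ k.1) : ∃ z, f z = .inl i := by
  set u := (e k).symm ⟨i, hi⟩
  obtain ⟨r, hur, hrv⟩ := Set.exists_ne_of_one_lt_ncard
    (show 1 < (H.neighborSet u).ncard by rw [← degOf, hreg]; omega) v
  have hr : r ∈ farSet H v := mem_farSet.2 ⟨hrv, fun h => hindep u u.2 r h hur⟩
  obtain ⟨x, hx⟩ := exists_eq_inr_of_connected hreg hconn f hr₀ hx₀ hr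
  have hu : copyMap e (k, b') u ∈ f '' H.neighborSet x := by
    rw [image_neighborSet_of_eq_inr hreg f hr hx]
    exact ⟨u, hur.symm, rfl⟩
  obtain ⟨z, -, hz⟩ := hu
  exact ⟨z, by simp [hz, copyMap_of_mem e u.2, u]⟩

lemma exists_hit_slot (hd : 1 ≤ d) (hreg : ∀ w, degOf H w = d)
    (hindep : ∀ x ∈ H.neighborSet v, ∀ y ∈ H.neighborSet v, ¬H.Adj x y)
    (f : Copy H (colorSubgraph (gadget e) gadgetColor b)) (x : V) :
    ∃ (k : Slot d) (x₀ r₀ : V), r₀ ∈ farSet H v ∧ f x₀ = .inr ((k, b), r₀) ∧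
      ((∃ i ∈ k.1, f x = .inl i) ∨ ∃ r ∈ farSet H v, f x = .inr ((k, b), r)) := by
  obtain ⟨y, hxy⟩ : (H.neighborSet x).Nonempty :=
    Set.nonempty_of_ncard_ne_zero (by rw [← degOf, hreg]; omega)
  obtain ⟨⟨c, x', y', hx'v, hy'v, hxy', hx', hy'⟩, hcol⟩ := f.toHom.map_adj hxy
  rw [← hx', ← hy', gadgetColor_copyMap e hindep c hxy'] at hcol
  obtain ⟨k, b'⟩ := c
  dsimp only at hcol
  subst b'
  by_cases hx'N : x' ∈ H.neighborSet v
  · have hy'N : y' ∉ H.neighborSet v := fun h => hindep x' hx'N y' h hxy'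
    refine ⟨k, y, y', mem_farSet.2 ⟨hy'v, hy'N⟩, ?_, .inl ⟨_, (e k ⟨x', hx'N⟩).2, ?_⟩⟩
    · rw [← Copy.toHom_apply, ← hy', copyMap_of_notMem e hy'N]
    · rw [← Copy.toHom_apply, ← hx', copyMap_of_mem e hx'N]
  · have hr : x' ∈ farSet H v := mem_farSet.2 ⟨hx'v, hx'N⟩
    have hfx : f x = .inr ((k, b), x') := by
      rw [← Copy.toHom_apply, ← hx', copyMap_of_notMem e hx'N]
    exact ⟨k, x, x', hr, hfx, .inr ⟨x', hr, hfx⟩⟩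

/-- For `d ≥ 2`, two distinct slots cannot both be hit: together with their slot vertices, the
two copies of `H − v − N(v)` would need more than `|V(H)|` vertices. For `d = 1` there is only
one slot. -/
lemma slot_eq_of_hit [Finite V] (hd : 1 ≤ d) (hreg : ∀ w, degOf H w = d)
    (hindep : ∀ x ∈ H.neighborSet v, ∀ y ∈ H.neighborSet v, ¬H.Adj x y)
    (hconn : (H.induce (farSet H v)).Connected)
    (f : Copy H (colorSubgraph (gadget e) gadgetColor b)) {k k' : Slot d} {x r x' r' : V}
    (hr : r ∈ farSet H v) (hx : f x = .inr ((k, b), r))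
    (hr' : r' ∈ farSet H v) (hx' : f x' = .inr ((k', b), r')) : k = k' := by
  classical
  cases nonempty_fintype V
  by_contra hne
  obtain rfl | hd2 : d = 1 ∨ 2 ≤ d := by omega
  · exact hne (Subtype.ext ((Finset.eq_univ_of_card _ (by simp [k.2])).trans
      (Finset.eq_univ_of_card _ (by simp [k'.2])).symm))
  have hit : ∀ {k₀ : Slot d} {x₀ r₀ : V}, r₀ ∈ farSet H v → f x₀ = .inr ((k₀, b), r₀) →
      k₀.1 ⊆ (Finset.univ.image f).toLeft ∧
        {(k₀, b)} ×ˢ (farSet H v).toFinset ⊆ (Finset.univ.image f).toRight := by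
    intro k₀ x₀ r₀ hr₀ hx₀
    refine ⟨fun i hi => ?_, fun ⟨c, q⟩ hcq => ?_⟩
    · simpa using exists_eq_inl_of_mem_slot hd2 hreg hindep hconn f hr₀ hx₀ hi
    · simp only [Finset.mem_product, Finset.mem_singleton, Set.mem_toFinset] at hcq
      obtain ⟨rfl, hq⟩ := hcq
      simpa using exists_eq_inr_of_connected hreg hconn f hr₀ hx₀ hq
  have hsub : (k.1 ∪ k'.1).disjSum
      ({(k, b)} ×ˢ (farSet H v).toFinset ∪ {(k', b)} ×ˢ (farSet H v).toFinset) ⊆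
        Finset.univ.image f :=
    Finset.disjSum_subset.2 ⟨Finset.union_subset (hit hr hx).1 (hit hr' hx').1,
      Finset.union_subset (hit hr hx).2 (hit hr' hx').2⟩
  have hcard := (Finset.card_le_card hsub).trans Finset.card_image_le
  rw [Finset.card_disjSum, Finset.card_union_of_disjoint
      (Finset.disjoint_product.2 (.inl (by simpa using hne))),
    Finset.card_product, Finset.card_product, Finset.card_singleton, Finset.card_singleton,
    Finset.card_univ,
    ← Nat.card_eq_fintype_card, ← ncard_farSet_add hreg (v := v),
    Set.ncard_eq_toFinset_card'] at hcard
  have hkk' : k.1.card < (k.1 ∪ k'.1).card := by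
    refine Finset.card_lt_card (Finset.ssubset_iff_subset_ne.2
      ⟨Finset.subset_union_left, fun h => hne (Subtype.ext ?_)⟩)
    exact (Finset.eq_of_subset_of_card_le (h ▸ Finset.subset_union_right)
      (by rw [k.2, k'.2])).symm
  have hR : 0 < (farSet H v).toFinset.card := Finset.card_pos.2 ⟨r, by simpa using hr⟩
  have := k.2
  omega

/-- The gadget coloring has no monochromatic copy of `H`: all of `H` would have to live in
one copy of `H − v` together with its slot, which has one vertex too few. -/
theorem not_hasMonoCopy_gadget [Finite V] (hd : 1 ≤ d) (hreg : ∀ w, degOf H w = d)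
    (hindep : ∀ x ∈ H.neighborSet v, ∀ y ∈ H.neighborSet v, ¬H.Adj x y)
    (hconn : (H.induce (farSet H v)).Connected) :
    ¬HasMonoCopy (gadget e) H gadgetColor := by
  classical
  cases nonempty_fintype V
  rintro ⟨b, g, hg, hadj⟩
  let f : Copy H (colorSubgraph (gadget e) gadgetColor b) := ⟨⟨g, fun h => hadj h⟩, hg⟩
  have hf : Function.Injective f := fun _ _ h => hg h
  obtain ⟨k, x₀, r₀, hr₀, hx₀, -⟩ := exists_hit_slot hd hreg hindep f v
  have hsub : Finset.univ.image f ⊆ k.1.disjSum ({(k, b)} ×ˢ (farSet H v).toFinset) := by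
    intro t ht
    obtain ⟨x, -, rfl⟩ := Finset.mem_image.1 ht
    obtain ⟨k', x₁, r₁, hr₁, hx₁, hx⟩ := exists_hit_slot hd hreg hindep f x
    obtain rfl := slot_eq_of_hit hd hreg hindep hconn f hr₁ hx₁ hr₀ hx₀
    rcases hx with ⟨i, hi, hx⟩ | ⟨r, hr, hx⟩
    · simp [hx, hi]
    · simp [hx, hr]
  have hcard := Finset.card_le_card hsub
  rw [Finset.card_image_of_injective _ hf, Finset.card_disjSum, Finset.card_product,
    Finset.card_singleton, k.2, Finset.card_univ, ← Nat.card_eq_fintype_card,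
    ← ncard_farSet_add hreg (v := v), Set.ncard_eq_toFinset_card'] at hcard
  omega

end NoMonoCopy

section Apex

variable {α : Type*}

def addApex (F : SimpleGraph α) (A : Set α) : SimpleGraph (Option α) where
  Adj a b := match a, b with
    | some x, some y => F.Adj x y
    | none, some y => y ∈ A
    | some x, none => x ∈ A
    | none, none => False
  symm := ⟨by rintro (_ | x) (_ | y) h <;> first | exact h | exact h.symm⟩
  loopless := ⟨by rintro (_ | x) h; exacts [h, F.loopless.irrefl x h]⟩

def copyAddApex (F : SimpleGraph α) (A : Set α) : Copy F (addApex F A) :=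
  ⟨⟨some, fun h => h⟩, Option.some_injective α⟩

lemma degOf_addApex_none (F : SimpleGraph α) (A : Set α) : degOf (addApex F A) none = A.ncard := by
  rw [degOf, ← Set.ncard_image_of_injective A (Option.some_injective α)]
  congr 1
  ext (_ | y)
  · simp [addApex]
  · simp [addApex, SimpleGraph.mem_neighborSet]

end Apex

section UpperBound

variable {V : Type*} {H : SimpleGraph V} {v : V} {d : ℕ} {e : ∀ k : Slot d, H.neighborSet v ≃ k.1}

theorem isRamseyFor_addApex (hd : 1 ≤ d)
    (hindep : ∀ x ∈ H.neighborSet v, ∀ y ∈ H.neighborSet v, ¬H.Adj x y)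
    {α : Type*} (F : SimpleGraph α) (g : GadgetVert V d → α) (hg : Function.Injective g)
    (hgadj : ∀ s t, (gadget e).Adj s t → F.Adj (g s) (g t))
    (hforce : ∀ c : Sym2 α → Bool, ¬HasMonoCopy F H c →
      (∀ s t, (gadget e).Adj s t → c s(g s, g t) = gadgetColor s(s, t)) ∨
      (∀ s t, (gadget e).Adj s t → c s(g s, g t) = !gadgetColor s(s, t))) :
    IsRamseyFor (addApex F (Set.range (g ∘ .inl))) H := by
  classical
  intro c
  by_cases hmono : HasMonoCopy F H fun e => c (e.map some)
  · exact hmono.of_copy (copyAddApex F _)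
  obtain ⟨flip, hflip⟩ : ∃ flip : Bool, ∀ s t, (gadget e).Adj s t →
      c s(some (g s), some (g t)) = (gadgetColor s(s, t) ^^ flip) := by
    rcases hforce _ hmono with h | h
    · exact ⟨false, fun s t hst => by simpa using h s t hst⟩
    · exact ⟨true, fun s t hst => by simpa using h s t hst⟩
  obtain ⟨b, k, hk⟩ := exists_slot_forall_eq hd fun i => c s(none, some (g (.inl i)))
  -- the copy on the slot `k` whose edges `c` colors `b`
  let cp : Slot d × Bool := (k, b ^^ flip)
  let Γ := colorSubgraph (addApex F (Set.range (g ∘ .inl))) c b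
  have hapex : ∀ y ∈ H.neighborSet v, Γ.Adj none (some (g (copyMap e cp y))) := by
    intro y hy
    rw [copyMap_of_mem e hy]
    exact ⟨⟨_, rfl⟩, hk _ (e k ⟨y, hy⟩).2⟩
  have hcopy : ∀ x y, x ≠ v → y ≠ v → H.Adj x y →
      Γ.Adj (some (g (copyMap e cp x))) (some (g (copyMap e cp y))) := by
    intro x y hx hy hxy
    have hst : (gadget e).Adj (copyMap e cp x) (copyMap e cp y) := ⟨cp, x, y, hx, hy, hxy, rfl, rfl⟩
    refine ⟨hgadj _ _ hst, ?_⟩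
    rw [hflip _ _ hst, gadgetColor_copyMap e hindep cp hxy, Bool.xor_assoc, Bool.xor_self,
      Bool.xor_false]
  let f : V → Option α := fun x => if x = v then none else some (g (copyMap e cp x))
  refine ⟨b, f, fun x y hxy => ?_, fun x y hxy => ?_⟩
  · by_cases hx : x = v <;> by_cases hy : y = v <;> simp only [f, hx, hy, if_true, if_false,
      reduceCtorEq, Option.some_inj] at hxy
    · exact hx.trans hy.symm
    · exact copyMap_injective e cp (hg hxy)
  · by_cases hx : x = v <;> by_cases hy : y = v <;> simp only [f, hx, hy, if_true, if_false]
    · exact absurd hxy (by rw [hx, hy]; exact H.loopless.irrefl v)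
    · exact hapex y (hx ▸ hxy)
    · exact (hapex x (hy ▸ hxy.symm)).symm
    · exact hcopy x y hx hy hxy

end UpperBound

theorem exists_isRamseyMinimalFor_degOf_le {V : Type*} [Fintype V] {H : SimpleGraph V} {v : V}
    {d : ℕ} (hd : 1 ≤ d) (hreg : ∀ w, degOf H w = d) (hbel : HasBELGadgets H)
    (hindep : ∀ x ∈ H.neighborSet v, ∀ y ∈ H.neighborSet v, ¬H.Adj x y)
    (hconn : (H.induce (farSet H v)).Connected) :
    ∃ (n : ℕ) (F : SimpleGraph (Fin n)), IsRamseyMinimalFor F H ∧ ∃ w, degOf F w ≤ 2 * d - 1 := by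
  classical
  have hN : Fintype.card (H.neighborSet v) = d := by
    rw [← Nat.card_eq_fintype_card, Nat.card_coe_set_eq]
    exact hreg v
  let e : ∀ k : Slot d, H.neighborSet v ≃ k.1 :=
    fun k => Fintype.equivOfCardEq (by rw [hN, Fintype.card_coe, k.2])
  obtain ⟨N, F, g, hFR, hg, hgadj, hforce⟩ := hbel.exists_forcing (gadget e) gadgetColor
    (not_hasMonoCopy_gadget hd hreg hindep hconn)
  obtain ⟨n, F', hF', ⟨ι⟩⟩ := (isRamseyFor_addApex hd hindep F g hg (fun s t => (hgadj s t).1)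
    hforce).exists_isRamseyMinimalFor_fin
  -- otherwise `ι` would land in `F`, which is not Ramsey
  obtain ⟨w, hw⟩ : ∃ w, ι w = none := by
    by_contra! h
    choose j hj using fun w => Option.ne_none_iff_exists'.1 (h w)
    refine hFR (hF'.1.of_copy ⟨⟨j, fun {a b} hab => ?_⟩, fun a b hab => ι.injective ?_⟩)
    · have := ι.toHom.map_adj hab
      rwa [Copy.toHom_apply, Copy.toHom_apply, hj, hj] at this
    · rw [Copy.toHom_apply, Copy.toHom_apply, hj, hj]
      exact congrArg some hab
  refine ⟨n, F', hF', w, ?_⟩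
  calc degOf F' w ≤ degOf _ (ι w) := degOf_le_of_copy ι w
    _ = 2 * d - 1 := by
      rw [hw, degOf_addApex_none, Set.ncard_range_of_injective (hg.comp Sum.inl_injective)]
      simp

/-- Let `d ≥ 1` and let `H` be a finite `d`-regular simple graph with BEL gadgets.
If `H` has a vertex `v` whose neighborhood `N(v)` is an independent set and such that
`H − v − N(v)` is connected, then `s(H) = 2d − 1`. -/
theorem stmt_16 (d : ℕ) (hd : 1 ≤ d) (V : Type) [Fintype V] (H : SimpleGraph V)
    (hreg : ∀ w : V, degOf H w = d)
    (hbel : HasBELGadgets H)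
    (hv : ∃ v : V, (∀ x ∈ H.neighborSet v, ∀ y ∈ H.neighborSet v, ¬ H.Adj x y) ∧
      (H.induce ({v} ∪ H.neighborSet v)ᶜ).Connected) :
    sVal H = 2 * d - 1 := by
  obtain ⟨v, hindep, hconn⟩ := hv
  have : Nonempty V := ⟨v⟩
  have hlow : ∀ {n} {F : SimpleGraph (Fin n)}, IsRamseyMinimalFor F H → 2 * d - 1 ≤ minDeg F :=
    fun hF => have := hF.1.nonempty; le_minDeg (le_degOf_of_isRamseyMinimalFor hreg hF)
  obtain ⟨n, F, hF, w, hw⟩ := exists_isRamseyMinimalFor_degOf_le hd hreg hbel hindep hconn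
  refine le_antisymm (Nat.sInf_le ⟨n, F, hF, le_antisymm ((minDeg_le F w).trans hw) (hlow hF)⟩)
    (le_csInf ⟨_, n, F, hF, rfl⟩ ?_)
  rintro _ ⟨m, F', hF', rfl⟩
  exact hlow hF'
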